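/- arXiv:1806.05271 — 5 statements merged into one kernel-verified Lean document; each statement's English description precedes it below -/
import Mathlib

section
/- Let x₁, …, x_m be nonnegative reals, let 1 ≤ k ≤ m−1, and suppose the sum of x₁, …, x_k equals (k/m)·(x₁+⋯+x_m) + Δ. Then x₁² + ⋯ + x_m² ≥ (1/m)(x₁+⋯+x_m)² + Δ²·m/(k(m−k)) ≥ (1/m)(x₁+⋯+x_m)² + Δ²/k. -/
open SimpleGraph

/-- The subgraph of `G` consisting of the edges of color `i`. -/
def colorSub {V : Type*} {r : ℕ} (G : SimpleGraph V) (c : Sym2 V → Fin r) (i : Fin r) :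
    SimpleGraph V where
  Adj u v := G.Adj u v ∧ c s(u, v) = i
  symm := by
    constructor
    intro u v h
    exact ⟨h.1.symm, by rw [Sym2.eq_swap]; exact h.2⟩
  loopless := by
    constructor
    intro u h
    exact G.loopless.irrefl u h.1

/-- The degree of `v`, as the number of its neighbors. -/
noncomputable def nd {V : Type*} (G : SimpleGraph V) (v : V) : ℕ :=
  (G.neighborSet v).ncard

/-!
Apply Cauchy–Schwarz separately to the first `k` and to the last `m - k` values, with sums `A` and
`B`: this gives `∑ xᵢ² ≥ A² / k + B² / (m - k)`, and this two-term bound is exactly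
`(A + B)² / m + Δ² m / (k (m - k))`, where `Δ = A - (k / m)(A + B)`.
-/

open Finset

lemma sq_sum_div_card_le_sum_sq {ι : Type*} (s : Finset ι) (f : ι → ℝ) :
    (∑ i ∈ s, f i) ^ 2 / #s ≤ ∑ i ∈ s, f i ^ 2 :=
  div_le_of_le_mul₀ (by positivity) (sum_nonneg fun _ _ => sq_nonneg _)
    (by rw [mul_comm]; exact sq_sum_le_card_mul_sum_sq)

lemma sq_div_add_sq_div_sub_eq {k m : ℝ} (hk : k ≠ 0) (hmk : m - k ≠ 0) (hm : m ≠ 0) (a b : ℝ) :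
    a ^ 2 / k + b ^ 2 / (m - k) =
      (a + b) ^ 2 / m + (a - k / m * (a + b)) ^ 2 * m / (k * (m - k)) := by
  field_simp
  ring

theorem sq_sum_div_card_add_defect_le_sum_sq {ι : Type*} [Fintype ι] [DecidableEq ι] (s : Finset ι)
    (hs : 0 < #s) (hsc : #s < Fintype.card ι) (x : ι → ℝ) :
    (∑ i, x i) ^ 2 / Fintype.card ι
        + (∑ i ∈ s, x i - #s / Fintype.card ι * ∑ i, x i) ^ 2 * Fintype.card ι
          / (#s * (Fintype.card ι - #s)) ≤ ∑ i, x i ^ 2 := by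
  have hk : (#s : ℝ) ≠ 0 := by positivity
  have hmk : (Fintype.card ι : ℝ) - #s ≠ 0 := sub_ne_zero.2 (by exact_mod_cast hsc.ne')
  have hm : (Fintype.card ι : ℝ) ≠ 0 := by exact_mod_cast (hs.trans hsc).ne'
  have hcard_compl : (#sᶜ : ℝ) = Fintype.card ι - #s := by
    rw [card_compl, Nat.cast_sub hsc.le]
  rw [← sum_add_sum_compl s x, ← sq_div_add_sq_div_sub_eq hk hmk hm, ← sum_add_sum_compl s,
    ← hcard_compl]
  exact add_le_add (sq_sum_div_card_le_sum_sq s x) (sq_sum_div_card_le_sum_sq sᶜ x)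

theorem stmt6_general (m k : ℕ) (hk1 : 1 ≤ k) (hkm : k ≤ m - 1)
    (x : Fin m → ℝ) (Δ : ℝ)
    (h : ∑ i ∈ Finset.univ.filter (fun i : Fin m => (i : ℕ) < k), x i
        = ((k : ℝ) / m) * ∑ i, x i + Δ) :
    (1 / (m : ℝ)) * (∑ i, x i) ^ 2 + Δ ^ 2 * m / (k * ((m : ℝ) - k)) ≤ ∑ i, (x i) ^ 2 ∧
    (1 / (m : ℝ)) * (∑ i, x i) ^ 2 + Δ ^ 2 / k ≤
      (1 / (m : ℝ)) * (∑ i, x i) ^ 2 + Δ ^ 2 * m / (k * ((m : ℝ) - k)) := by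
  have hkm' : k < m := by omega
  have hcard : #{i : Fin m | (i : ℕ) < k} = k := by
    rw [Fin.card_filter_val_lt, min_eq_right hkm'.le]
  have hΔ : Δ = ∑ i ∈ {i : Fin m | (i : ℕ) < k}, x i - k / m * ∑ i, x i := by
    rw [h]; ring
  have hk0 : (0 : ℝ) < k := by exact_mod_cast hk1
  have hmk0 : (0 : ℝ) < m - k := sub_pos.2 (by exact_mod_cast hkm')
  constructor
  · have hdefect := sq_sum_div_card_add_defect_le_sum_sq _ (hcard ▸ hk1) (by simpa [hcard]) x
    rw [hcard, Fintype.card_fin, ← hΔ] at hdefect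
    rwa [one_div_mul_eq_div]
  · gcongr _ + ?_
    calc Δ ^ 2 / k = Δ ^ 2 * (m - k) / (k * (m - k)) := by field_simp
      _ ≤ Δ ^ 2 * m / (k * (m - k)) := by gcongr; linarith

theorem stmt6 (m k : ℕ) (hk1 : 1 ≤ k) (hkm : k ≤ m - 1) (hm : 1 ≤ m)
    (x : Fin m → ℝ) (hx : ∀ i, 0 ≤ x i) (Δ : ℝ)
    (h : ∑ i ∈ Finset.univ.filter (fun i : Fin m => (i : ℕ) < k), x i
        = ((k : ℝ) / m) * ∑ i, x i + Δ) :
    (1 / (m : ℝ)) * (∑ i, x i) ^ 2 + Δ ^ 2 * m / (k * ((m : ℝ) - k)) ≤ ∑ i, (x i) ^ 2 ∧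
    (1 / (m : ℝ)) * (∑ i, x i) ^ 2 + Δ ^ 2 / k ≤
      (1 / (m : ℝ)) * (∑ i, x i) ^ 2 + Δ ^ 2 * m / (k * ((m : ℝ) - k)) :=
  stmt6_general m k hk1 hkm x Δ h
end

section
/- Let G be a bipartite graph with parts X and Y with |X| + |Y| = n and |Y| ≥ |X| > n/4. Suppose every vertex of X has at least |Y| − n/8 neighbors in Y and every vertex of Y has at least |X| − n/8 neighbors in X. Then in every 2-coloring of the edges of G there is a monochromatic connected component H with |H ∩ X| ≥ |X|/2 and |H ∩ Y| ≥ |Y|/2; in particular H has at least n/2 vertices. -/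
open SimpleGraph

/-!
Let `d = ⌊n/8⌋`, so that every vertex misses at most `d` vertices of the other side.

If a monochromatic component `C`, of color `i`, contains half of `Y` but less than half of `X`,
then all edges between `C ∩ Y` and `X \ C` have the other color `j`. These two sets are large and
almost completely joined, so they lie in one component of color `j`, which is large on both sides.

Otherwise every monochromatic component contains less than half of `Y`. Two vertices of `X` in one
component of color `i` are then almost completely joined in color `j` to the more than `2d` vertices
of `Y` outside it, so they share a component of color `j` too: both colors cut `X` into the same
classes. A class has at most `d` vertices, none adjacent to a vertex of `Y` outside both components
containing it. Hence there are three vertices of `X` in distinct classes. A common neighbour of them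
would join two of them by edges of one color, so `Y` is covered by their three non-neighbourhoods
and `|Y| ≤ 3d < n/2`.
-/

theorem Set.ncard_inter_add_ncard_inter_le_of_disjoint {α : Type*} [Finite α] (s : Set α)
    {X Y : Set α} (hXY : Disjoint X Y) : (s ∩ X).ncard + (s ∩ Y).ncard ≤ s.ncard := by
  rw [← Set.ncard_union_eq (hXY.mono Set.inter_subset_right Set.inter_subset_right)]
  exact Set.ncard_le_ncard (Set.union_subset Set.inter_subset_left Set.inter_subset_left)

namespace SimpleGraph

variable {V : Type*} [Finite V]

theorem exists_adj_adj_of_ncard_sdiff_neighborSet_le {H : SimpleGraph V} {W : Set V} {d : ℕ}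
    {u v : V} (hu : (W \ H.neighborSet u).ncard ≤ d) (hv : (W \ H.neighborSet v).ncard ≤ d)
    (hW : 2 * d < W.ncard) : ∃ w ∈ W, H.Adj u w ∧ H.Adj v w := by
  by_contra! h
  have hcover : W ⊆ (W \ H.neighborSet u) ∪ (W \ H.neighborSet v) := fun w hw ↦ by
    by_cases huw : H.Adj u w
    · exact Or.inr ⟨hw, h w hw huw⟩
    · exact Or.inl ⟨hw, huw⟩
  have := (Set.ncard_le_ncard hcover).trans (Set.ncard_union_le _ _)
  omega

theorem reachable_of_ncard_sdiff_neighborSet_le {H : SimpleGraph V} {W : Set V} {d : ℕ}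
    {u v : V} (hu : (W \ H.neighborSet u).ncard ≤ d) (hv : (W \ H.neighborSet v).ncard ≤ d)
    (hW : 2 * d < W.ncard) : H.Reachable u v :=
  have ⟨_, _, huw, hvw⟩ := exists_adj_adj_of_ncard_sdiff_neighborSet_le hu hv hW
  huw.reachable.trans hvw.symm.reachable

theorem exists_connectedComponent_subset_supp_of_ncard_sdiff_neighborSet_le
    {H : SimpleGraph V} {S T : Set V} {d : ℕ}
    (hST : ∀ s ∈ S, (T \ H.neighborSet s).ncard ≤ d)
    (hTS : ∀ t ∈ T, (S \ H.neighborSet t).ncard ≤ d)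
    (hS : d < S.ncard) (hT : 2 * d < T.ncard) :
    ∃ D : H.ConnectedComponent, S ⊆ D.supp ∧ T ⊆ D.supp := by
  obtain ⟨s₀, hs₀⟩ := Set.nonempty_of_ncard_ne_zero (by omega : S.ncard ≠ 0)
  have hSD : S ⊆ (H.connectedComponentMk s₀).supp := fun s hs ↦
    ConnectedComponent.sound (reachable_of_ncard_sdiff_neighborSet_le (hST s hs) (hST s₀ hs₀) hT)
  refine ⟨_, hSD, fun t ht ↦ ?_⟩
  obtain ⟨s, hs, hts⟩ :=
    Set.exists_mem_notMem_of_ncard_lt_ncard ((hTS t ht).trans_lt hS)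
  have hadj : H.Adj t s := by_contra fun h ↦ hts ⟨hs, h⟩
  exact ConnectedComponent.mem_supp_of_adj_mem_supp _ (hSD hs) hadj.symm

theorem ncard_sdiff_neighborSet_le_of_subset {G H : SimpleGraph V} {T X : Set V} {v : V}
    (hTX : T ⊆ X) (hGH : ∀ w ∈ T, G.Adj v w → H.Adj v w) :
    (T \ H.neighborSet v).ncard ≤ (X \ G.neighborSet v).ncard :=
  Set.ncard_le_ncard fun w ⟨hwT, hw⟩ ↦ ⟨hTX hwT, fun h ↦ hw (hGH w hwT h)⟩

end SimpleGraph

namespace colorSub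

variable {V : Type*} {G : SimpleGraph V} {c : Sym2 V → Fin 2}

theorem adj_or_adj {i j : Fin 2} (hij : i ≠ j) {u w : V} (h : G.Adj u w) :
    (colorSub G c i).Adj u w ∨ (colorSub G c j).Adj u w := by
  by_cases hc : c s(u, w) = i
  · exact Or.inl ⟨h, hc⟩
  · exact Or.inr ⟨h, by omega⟩

theorem adj_of_mem_supp_of_notMem_supp {i j : Fin 2} (hij : i ≠ j)
    {C : (colorSub G c i).ConnectedComponent} {u w : V} (hu : u ∈ C.supp) (hw : w ∉ C.supp)
    (h : G.Adj u w) : (colorSub G c j).Adj u w :=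
  (adj_or_adj hij h).resolve_left fun hi ↦ hw (C.mem_supp_of_adj_mem_supp hu hi)

theorem exists_reachable_of_adj₃ {y u₁ u₂ u₃ : V} (h₁ : G.Adj y u₁) (h₂ : G.Adj y u₂)
    (h₃ : G.Adj y u₃) : ∃ i, (colorSub G c i).Reachable u₁ u₂ ∨
      (colorSub G c i).Reachable u₁ u₃ ∨ (colorSub G c i).Reachable u₂ u₃ := by
  have reach {u v : V} (hu : G.Adj y u) (hv : G.Adj y v) (hc : c s(y, u) = c s(y, v)) :
      (colorSub G c (c s(y, u))).Reachable u v :=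
    (show (colorSub G c _).Adj y u from ⟨hu, rfl⟩).symm.reachable.trans
      (show (colorSub G c _).Adj y v from ⟨hv, hc.symm⟩).reachable
  have : c s(y, u₁) = c s(y, u₂) ∨ c s(y, u₁) = c s(y, u₃) ∨ c s(y, u₂) = c s(y, u₃) := by omega
  rcases this with hc | hc | hc
  · exact ⟨_, Or.inl (reach h₁ h₂ hc)⟩
  · exact ⟨_, Or.inr (Or.inl (reach h₁ h₃ hc))⟩
  · exact ⟨_, Or.inr (Or.inr (reach h₂ h₃ hc))⟩

end colorSub

section TwoColoredComponents

variable {V : Type*} [Finite V] {G : SimpleGraph V} {c : Sym2 V → Fin 2} {X Y : Set V} {d : ℕ}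

theorem exists_large_component_of_two_mul_ncard_supp_inter_ge
    (hXY : ∀ x ∈ X, (Y \ G.neighborSet x).ncard ≤ d)
    (hYX : ∀ y ∈ Y, (X \ G.neighborSet y).ncard ≤ d)
    (hdX : 2 * d < X.ncard) (hdY : 2 * d < Y.ncard) (hd : 8 * d ≤ X.ncard + Y.ncard)
    {i : Fin 2} (C : (colorSub G c i).ConnectedComponent)
    (hC : Y.ncard ≤ 2 * (C.supp ∩ Y).ncard) :
    ∃ (j : Fin 2) (D : (colorSub G c j).ConnectedComponent),
      X.ncard ≤ 2 * (D.supp ∩ X).ncard ∧ Y.ncard ≤ 2 * (D.supp ∩ Y).ncard := by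
  by_cases hCX : X.ncard ≤ 2 * (C.supp ∩ X).ncard
  · exact ⟨i, C, hCX, hC⟩
  obtain ⟨j, hij⟩ : ∃ j, i ≠ j := ⟨i + 1, by omega⟩
  set S := C.supp ∩ Y
  set T := X \ C.supp
  have hT : (X ∩ C.supp).ncard + T.ncard = X.ncard :=
    Set.ncard_inter_add_ncard_sdiff_eq_ncard X C.supp
  rw [Set.inter_comm] at hCX
  have hST : ∀ s ∈ S, (T \ (colorSub G c j).neighborSet s).ncard ≤ d := fun s hs ↦
    (ncard_sdiff_neighborSet_le_of_subset Set.sdiff_subset fun t ht ↦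
      colorSub.adj_of_mem_supp_of_notMem_supp hij hs.1 ht.2).trans (hYX s hs.2)
  have hTS : ∀ t ∈ T, (S \ (colorSub G c j).neighborSet t).ncard ≤ d := fun t ht ↦
    (ncard_sdiff_neighborSet_le_of_subset Set.inter_subset_right fun s hs hts ↦
      (colorSub.adj_of_mem_supp_of_notMem_supp hij hs.1 ht.2 hts.symm).symm).trans (hXY t ht.1)
  obtain ⟨D, hSD, hTD⟩ : ∃ D : (colorSub G c j).ConnectedComponent, S ⊆ D.supp ∧ T ⊆ D.supp := by
    by_cases h : 2 * d < T.ncard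
    · exact exists_connectedComponent_subset_supp_of_ncard_sdiff_neighborSet_le hST hTS
        (by omega) h
    · obtain ⟨D, hTD, hSD⟩ :=
        exists_connectedComponent_subset_supp_of_ncard_sdiff_neighborSet_le hTS hST
          (by omega) (by omega)
      exact ⟨D, hSD, hTD⟩
  refine ⟨j, D, ?_, ?_⟩
  · have := Set.ncard_le_ncard (t := D.supp ∩ X) fun t ht ↦ ⟨hTD ht, ht.1⟩
    omega
  · have := Set.ncard_le_ncard (t := D.supp ∩ Y) fun s hs ↦ ⟨hSD hs, hs.2⟩
    omega

theorem reachable_of_reachable_of_forall_two_mul_ncard_supp_inter_lt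
    (hXY : ∀ x ∈ X, (Y \ G.neighborSet x).ncard ≤ d) (hdY : 4 * d ≤ Y.ncard)
    {i j : Fin 2} (hij : i ≠ j)
    (hsmall : ∀ C : (colorSub G c i).ConnectedComponent, 2 * (C.supp ∩ Y).ncard < Y.ncard)
    {x x' : V} (hx : x ∈ X) (hx' : x' ∈ X) (h : (colorSub G c i).Reachable x x') :
    (colorSub G c j).Reachable x x' := by
  set C := (colorSub G c i).connectedComponentMk x
  set W := Y \ C.supp
  have hW : (Y ∩ C.supp).ncard + W.ncard = Y.ncard :=
    Set.ncard_inter_add_ncard_sdiff_eq_ncard Y C.supp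
  have hCY := hsmall C
  rw [Set.inter_comm] at hCY
  have hmiss : ∀ u ∈ C.supp, u ∈ X → (W \ (colorSub G c j).neighborSet u).ncard ≤ d :=
    fun u hu huX ↦ (ncard_sdiff_neighborSet_le_of_subset Set.sdiff_subset fun w hw ↦
      colorSub.adj_of_mem_supp_of_notMem_supp hij hu hw.2).trans (hXY u huX)
  exact reachable_of_ncard_sdiff_neighborSet_le (hmiss x rfl hx)
    (hmiss x' (ConnectedComponent.sound h.symm) hx') (by omega)

theorem ncard_inter_supp_le_of_forall_two_mul_ncard_supp_inter_lt
    (hXY : ∀ x ∈ X, (Y \ G.neighborSet x).ncard ≤ d)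
    (hYX : ∀ y ∈ Y, (X \ G.neighborSet y).ncard ≤ d) (hdY : 4 * d ≤ Y.ncard)
    (hsmall : ∀ i (C : (colorSub G c i).ConnectedComponent), 2 * (C.supp ∩ Y).ncard < Y.ncard)
    (i : Fin 2) {x : V} (hx : x ∈ X) :
    (X ∩ ((colorSub G c i).connectedComponentMk x).supp).ncard ≤ d := by
  obtain ⟨j, hij⟩ : ∃ j, i ≠ j := ⟨i + 1, by omega⟩
  set Ci := (colorSub G c i).connectedComponentMk x
  set Cj := (colorSub G c j).connectedComponentMk x
  obtain ⟨y, hy, hyC⟩ : ∃ y ∈ Y, y ∉ (Ci.supp ∩ Y) ∪ (Cj.supp ∩ Y) := by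
    refine Set.exists_mem_notMem_of_ncard_lt_ncard ?_
    have := Set.ncard_union_le (Ci.supp ∩ Y) (Cj.supp ∩ Y)
    have := hsmall i Ci
    have := hsmall j Cj
    omega
  refine le_trans (Set.ncard_le_ncard (t := X \ G.neighborSet y)
    fun x' ⟨hx'X, hx'C⟩ ↦ ⟨hx'X, fun hadj ↦ ?_⟩) (hYX y hy)
  rcases colorSub.adj_or_adj hij hadj with h | h
  · exact hyC (Or.inl ⟨Ci.mem_supp_of_adj_mem_supp hx'C h.symm, hy⟩)
  · have hx'Cj : x' ∈ Cj.supp := ConnectedComponent.sound <|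
      reachable_of_reachable_of_forall_two_mul_ncard_supp_inter_lt hXY hdY hij (hsmall i) hx'X hx
        (ConnectedComponent.exact hx'C)
    exact hyC (Or.inr ⟨Cj.mem_supp_of_adj_mem_supp hx'Cj h.symm, hy⟩)

theorem exists_two_mul_ncard_supp_inter_ge
    (hXY : ∀ x ∈ X, (Y \ G.neighborSet x).ncard ≤ d)
    (hYX : ∀ y ∈ Y, (X \ G.neighborSet y).ncard ≤ d)
    (hdX : 2 * d < X.ncard) (hdY : 4 * d ≤ Y.ncard) :
    ∃ (i : Fin 2) (C : (colorSub G c i).ConnectedComponent), Y.ncard ≤ 2 * (C.supp ∩ Y).ncard := by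
  by_contra! hsmall
  set K : V → Set V := fun x ↦ ((colorSub G c 0).connectedComponentMk x).supp
  have hK : ∀ x ∈ X, (X ∩ K x).ncard ≤ d := fun x hx ↦
    ncard_inter_supp_le_of_forall_two_mul_ncard_supp_inter_lt hXY hYX hdY hsmall 0 hx
  obtain ⟨x₁, hx₁⟩ := Set.nonempty_of_ncard_ne_zero (by omega : X.ncard ≠ 0)
  obtain ⟨x₂, hx₂, hx₂₁⟩ :=
    Set.exists_mem_notMem_of_ncard_lt_ncard (t := X) ((hK x₁ hx₁).trans_lt (by omega))
  obtain ⟨x₃, hx₃, hx₃₁₂⟩ : ∃ x₃ ∈ X, x₃ ∉ (X ∩ K x₁) ∪ (X ∩ K x₂) := by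
    refine Set.exists_mem_notMem_of_ncard_lt_ncard ?_
    have := Set.ncard_union_le (X ∩ K x₁) (X ∩ K x₂)
    have := hK x₁ hx₁
    have := hK x₂ hx₂
    omega
  have hsep : ∀ i u v, u ∈ X → v ∈ X → v ∉ X ∩ K u → ¬(colorSub G c i).Reachable u v := by
    intro i u v hu hv huv h
    refine huv ⟨hv, ConnectedComponent.sound ?_⟩
    by_cases hi : i = 0
    · subst hi
      exact h.symm
    · exact (reachable_of_reachable_of_forall_two_mul_ncard_supp_inter_lt hXY hdY hi
        (hsmall i) hu hv h).symm
  have hcover : Y ⊆ (Y \ G.neighborSet x₁) ∪ (Y \ G.neighborSet x₂) ∪ (Y \ G.neighborSet x₃) := by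
    intro y hy
    by_contra hy'
    simp only [Set.mem_union, Set.mem_sdiff, hy, true_and, not_or, not_not,
      mem_neighborSet] at hy'
    obtain ⟨⟨h₁, h₂⟩, h₃⟩ := hy'
    obtain ⟨i, h | h | h⟩ := colorSub.exists_reachable_of_adj₃ (c := c) h₁.symm h₂.symm h₃.symm
    · exact hsep i _ _ hx₁ hx₂ hx₂₁ h
    · exact hsep i _ _ hx₁ hx₃ (fun h' ↦ hx₃₁₂ (Or.inl h')) h
    · exact hsep i _ _ hx₂ hx₃ (fun h' ↦ hx₃₁₂ (Or.inr h')) h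
  have := (Set.ncard_le_ncard hcover).trans <|
    (Set.ncard_union_le _ _).trans (Nat.add_le_add_right (Set.ncard_union_le _ _) _)
  have := hXY x₁ hx₁
  have := hXY x₂ hx₂
  have := hXY x₃ hx₃
  have := hsmall 0 ((colorSub G c 0).connectedComponentMk x₁)
  omega

theorem exists_large_monochromatic_component
    (hXY : ∀ x ∈ X, (Y \ G.neighborSet x).ncard ≤ d)
    (hYX : ∀ y ∈ Y, (X \ G.neighborSet y).ncard ≤ d)
    (hXYcard : X.ncard ≤ Y.ncard) (hdX : 2 * d < X.ncard) (hd : 8 * d ≤ X.ncard + Y.ncard) :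
    ∃ (i : Fin 2) (C : (colorSub G c i).ConnectedComponent),
      X.ncard ≤ 2 * (C.supp ∩ X).ncard ∧ Y.ncard ≤ 2 * (C.supp ∩ Y).ncard := by
  obtain ⟨i, C, hC⟩ := exists_two_mul_ncard_supp_inter_ge hXY hYX hdX (by omega)
  exact exists_large_component_of_two_mul_ncard_supp_inter_ge hXY hYX hdX (by omega) hd C hC

end TwoColoredComponents

theorem ncard_sdiff_neighborSet_le_div {V : Type*} [Finite V] {G : SimpleGraph V} {Y : Set V}
    {v : V} {n k : ℕ} (hN : G.neighborSet v ⊆ Y) (h : (Y.ncard : ℝ) - n / k ≤ nd G v) :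
    (Y \ G.neighborSet v).ncard ≤ n / k := by
  have hsplit : ((Y \ G.neighborSet v).ncard : ℝ) + nd G v = Y.ncard := by
    exact_mod_cast Set.ncard_sdiff_add_ncard_of_subset hN
  rw [← Nat.floor_div_eq_div (K := ℝ)]
  exact Nat.le_floor (by linarith)

theorem stmt12 (a b n : ℕ) (hn : a + b = n) (hab : a ≤ b) (ha : (n : ℝ) / 4 < a)
    (G : SimpleGraph (Fin a ⊕ Fin b))
    (hbip : G ≤ completeBipartiteGraph (Fin a) (Fin b))
    (hX : ∀ x : Fin a, (b : ℝ) - n / 8 ≤ (nd G (Sum.inl x) : ℝ))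
    (hY : ∀ y : Fin b, (a : ℝ) - n / 8 ≤ (nd G (Sum.inr y) : ℝ))
    (c : Sym2 (Fin a ⊕ Fin b) → Fin 2) :
    ∃ (i : Fin 2) (C : (colorSub G c i).ConnectedComponent),
      (a : ℝ) / 2 ≤ ((C.supp ∩ Set.range Sum.inl).ncard : ℝ) ∧
      (b : ℝ) / 2 ≤ ((C.supp ∩ Set.range Sum.inr).ncard : ℝ) ∧
      (n : ℝ) / 2 ≤ (C.supp.ncard : ℝ) := by
  set X : Set (Fin a ⊕ Fin b) := Set.range Sum.inl
  set Y : Set (Fin a ⊕ Fin b) := Set.range Sum.inr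
  have hXcard : X.ncard = a := by simp [X, Set.ncard_range_of_injective Sum.inl_injective]
  have hYcard : Y.ncard = b := by simp [Y, Set.ncard_range_of_injective Sum.inr_injective]
  have hXY : ∀ x ∈ X, (Y \ G.neighborSet x).ncard ≤ n / 8 := by
    rintro _ ⟨p, rfl⟩
    refine ncard_sdiff_neighborSet_le_div (fun w hw ↦ ?_) (by rw [hYcard]; exact hX p)
    have := hbip hw
    cases w <;> simp_all [Y]
  have hYX : ∀ y ∈ Y, (X \ G.neighborSet y).ncard ≤ n / 8 := by
    rintro _ ⟨q, rfl⟩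
    refine ncard_sdiff_neighborSet_le_div (fun w hw ↦ ?_) (by rw [hXcard]; exact hY q)
    have := hbip hw
    cases w <;> simp_all [X]
  have hna : n < 4 * a := by exact_mod_cast (by linarith : (n : ℝ) < 4 * a)
  obtain ⟨i, C, hCX, hCY⟩ :=
    exists_large_monochromatic_component (c := c) hXY hYX (by omega) (by omega) (by omega)
  have hC : (C.supp ∩ X).ncard + (C.supp ∩ Y).ncard ≤ C.supp.ncard :=
    C.supp.ncard_inter_add_ncard_inter_le_of_disjoint Set.isCompl_range_inl_range_inr.disjoint
  refine ⟨i, C, ?_, ?_, ?_⟩ <;> rw [div_le_iff₀' two_pos] <;> norm_cast <;> omega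
end

section
/- Let G be a bipartite graph with parts X, Y of sizes m, n, with every vertex of X having more than (2/3)n neighbors in Y and every vertex of Y having more than (2/3)m neighbors in X, and fix a 2-coloring of the edges. If some monochromatic component intersects X in at least 2m/3 vertices or intersects Y in at least 2n/3 vertices, then some monochromatic component has at least (m+n)/2 vertices. -/
open SimpleGraph

/-!
Let `C` be a monochromatic component, say of color `i`, meeting `X` in a set `A` of at least
`2|X|/3` vertices. If `C` also contains half of `Y` it is already large enough. Otherwise more
than half of `Y` lies outside `C`. Any two such vertices `y, y'` have more than `|X|/3` common
neighbors, so they have a common neighbor in `A`; since both edges leave `C`, they have the other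
color. Every vertex of `A` has more than `2|Y|/3` neighbors, hence one outside `C`, again joined
in the other color. So `A` together with `Y \ C` lies in a single component of the other color,
which has at least `2|X|/3 + |Y|/2` vertices.
-/

namespace Set

variable {α : Type*} {s t u : Set α}

theorem ncard_add_ncard_le_ncard_inter_add [Finite α] (hs : s ⊆ u) (ht : t ⊆ u) :
    s.ncard + t.ncard ≤ (s ∩ t).ncard + u.ncard := by
  rw [← ncard_union_add_ncard_inter s t]
  have := ncard_le_ncard (union_subset hs ht)
  omega

theorem inter_nonempty_of_ncard_lt_ncard_add_ncard [Finite α] (hs : s ⊆ u) (ht : t ⊆ u)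
    (hstu : u.ncard < s.ncard + t.ncard) : (s ∩ t).Nonempty := by
  have := ncard_add_ncard_le_ncard_inter_add hs ht
  exact nonempty_of_ncard_ne_zero (by omega)

theorem ncard_add_ncard_le_of_disjoint [Finite α] (hst : Disjoint s t) (hs : s ⊆ u)
    (ht : t ⊆ u) : s.ncard + t.ncard ≤ u.ncard :=
  ncard_union_eq hst ▸ ncard_le_ncard (union_subset hs ht)

end Set

section Coloring

variable {V : Type*} {G : SimpleGraph V} {c : Sym2 V → Fin 2} {i : Fin 2}

theorem colorSub_add_one_adj_of_mem_supp_of_notMem_supp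
    {C : (colorSub G c i).ConnectedComponent} {x y : V}
    (hx : x ∈ C.supp) (hy : y ∉ C.supp) (hxy : G.Adj x y) : (colorSub G c (i + 1)).Adj x y := by
  refine ⟨hxy, ?_⟩
  have hne : c s(x, y) ≠ i := fun h ↦
    hy (ConnectedComponent.mem_supp_congr_adj C (show (colorSub G c i).Adj x y from ⟨hxy, h⟩)
      |>.mp hx)
  have fin_two : ∀ a b : Fin 2, a ≠ b → a = b + 1 := by decide
  exact fin_two _ _ hne

variable [Finite V] {X Y : Set V} {C : (colorSub G c i).ConnectedComponent}

theorem colorSub_add_one_reachable_of_mem_sdiff_supp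
    (hNX : ∀ y ∈ Y, G.neighborSet y ⊆ X)
    (hdegY : ∀ y ∈ Y, 2 * X.ncard < 3 * (G.neighborSet y).ncard)
    (hC : 2 * X.ncard ≤ 3 * (C.supp ∩ X).ncard)
    {y y' : V} (hy : y ∈ Y \ C.supp) (hy' : y' ∈ Y \ C.supp) :
    (colorSub G c (i + 1)).Reachable y y' := by
  have hcommon := Set.ncard_add_ncard_le_ncard_inter_add (hNX y hy.1) (hNX y' hy'.1)
  have hdy := hdegY y hy.1
  have hdy' := hdegY y' hy'.1
  obtain ⟨x, ⟨hyx, hy'x⟩, hxC, -⟩ := Set.inter_nonempty_of_ncard_lt_ncard_add_ncard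
    ((Set.inter_subset_left (t := G.neighborSet y')).trans (hNX y hy.1))
    (Set.inter_subset_right (s := C.supp))
    (by omega)
  exact (colorSub_add_one_adj_of_mem_supp_of_notMem_supp hxC hy.2 hyx.symm).symm.reachable.trans
    (colorSub_add_one_adj_of_mem_supp_of_notMem_supp hxC hy'.2 hy'x.symm).reachable

theorem exists_colorSub_add_one_supp_superset
    (hNX : ∀ y ∈ Y, G.neighborSet y ⊆ X) (hNY : ∀ x ∈ X, G.neighborSet x ⊆ Y)
    (hdegX : ∀ x ∈ X, 2 * Y.ncard < 3 * (G.neighborSet x).ncard)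
    (hdegY : ∀ y ∈ Y, 2 * X.ncard < 3 * (G.neighborSet y).ncard)
    (hC : 2 * X.ncard ≤ 3 * (C.supp ∩ X).ncard) (hout : Y.ncard < 2 * (Y \ C.supp).ncard) :
    ∃ D : (colorSub G c (i + 1)).ConnectedComponent,
      C.supp ∩ X ⊆ D.supp ∧ Y \ C.supp ⊆ D.supp := by
  obtain ⟨y₀, hy₀⟩ := Set.nonempty_of_ncard_ne_zero (s := Y \ C.supp) (by omega)
  have hYD : Y \ C.supp ⊆ (colorSub G c (i + 1)).connectedComponentMk y₀ :=
    fun y hy ↦ ConnectedComponent.sound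
      (colorSub_add_one_reachable_of_mem_sdiff_supp hNX hdegY hC hy hy₀)
  refine ⟨_, fun x ⟨hxC, hxX⟩ ↦ ?_, hYD⟩
  have hdx := hdegX x hxX
  obtain ⟨y, hxy, hy⟩ := Set.inter_nonempty_of_ncard_lt_ncard_add_ncard
    (hNY x hxX) (Set.sdiff_subset (t := C.supp)) (by omega)
  exact (ConnectedComponent.mem_supp_congr_adj _
    (colorSub_add_one_adj_of_mem_supp_of_notMem_supp hxC hy.2 hxy)).mpr (hYD hy)

theorem exists_large_component_of_large_side (hXY : Disjoint X Y)
    (hNX : ∀ y ∈ Y, G.neighborSet y ⊆ X) (hNY : ∀ x ∈ X, G.neighborSet x ⊆ Y)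
    (hdegX : ∀ x ∈ X, 2 * Y.ncard < 3 * (G.neighborSet x).ncard)
    (hdegY : ∀ y ∈ Y, 2 * X.ncard < 3 * (G.neighborSet y).ncard)
    (C : (colorSub G c i).ConnectedComponent) (hC : 2 * X.ncard ≤ 3 * (C.supp ∩ X).ncard) :
    ∃ (j : Fin 2) (D : (colorSub G c j).ConnectedComponent),
      X.ncard + Y.ncard ≤ 2 * D.supp.ncard := by
  have hY := Set.ncard_inter_add_ncard_sdiff_eq_ncard Y C.supp
  by_cases hout : Y.ncard < 2 * (Y \ C.supp).ncard
  · obtain ⟨D, hXD, hYD⟩ := exists_colorSub_add_one_supp_superset hNX hNY hdegX hdegY hC hout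
    have := Set.ncard_add_ncard_le_of_disjoint
      (hXY.mono Set.inter_subset_right Set.sdiff_subset) hXD hYD
    exact ⟨i + 1, D, by omega⟩
  · have := Set.ncard_add_ncard_le_of_disjoint
      (hXY.mono Set.inter_subset_right Set.inter_subset_left)
      (Set.inter_subset_left (s := C.supp) (t := X)) (Set.inter_subset_right (s := Y))
    exact ⟨i, C, by omega⟩

end Coloring

section Bipartite

variable {α β : Type*} {G : SimpleGraph (α ⊕ β)}

theorem neighborSet_subset_range_inr_of_mem_range_inl (hG : G ≤ completeBipartiteGraph α β)
    {u : α ⊕ β} (hu : u ∈ Set.range Sum.inl) : G.neighborSet u ⊆ Set.range Sum.inr := by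
  obtain ⟨a, rfl⟩ := hu
  rintro (_ | b) hv
  · simpa using hG hv
  · exact ⟨b, rfl⟩

theorem neighborSet_subset_range_inl_of_mem_range_inr (hG : G ≤ completeBipartiteGraph α β)
    {u : α ⊕ β} (hu : u ∈ Set.range Sum.inr) : G.neighborSet u ⊆ Set.range Sum.inl := by
  obtain ⟨b, rfl⟩ := hu
  rintro (a | _) hv
  · exact ⟨a, rfl⟩
  · simpa using hG hv

theorem exists_large_component_of_le_completeBipartiteGraph [Finite α] [Finite β]
    {c : Sym2 (α ⊕ β) → Fin 2} (hG : G ≤ completeBipartiteGraph α β)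
    (hdeg_inl : ∀ a, 2 * Nat.card β < 3 * (G.neighborSet (.inl a)).ncard)
    (hdeg_inr : ∀ b, 2 * Nat.card α < 3 * (G.neighborSet (.inr b)).ncard)
    (hbig : ∃ (i : Fin 2) (C : (colorSub G c i).ConnectedComponent),
      2 * Nat.card α ≤ 3 * (C.supp ∩ Set.range Sum.inl).ncard ∨
      2 * Nat.card β ≤ 3 * (C.supp ∩ Set.range Sum.inr).ncard) :
    ∃ (j : Fin 2) (D : (colorSub G c j).ConnectedComponent),
      Nat.card α + Nat.card β ≤ 2 * D.supp.ncard := by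
  set X : Set (α ⊕ β) := Set.range Sum.inl
  set Y : Set (α ⊕ β) := Set.range Sum.inr
  have hXcard : X.ncard = Nat.card α := Set.ncard_range_of_injective Sum.inl_injective
  have hYcard : Y.ncard = Nat.card β := Set.ncard_range_of_injective Sum.inr_injective
  rw [← hXcard, ← hYcard] at hbig ⊢
  have hXY : Disjoint X Y := Set.isCompl_range_inl_range_inr.disjoint
  have hNX : ∀ y ∈ Y, G.neighborSet y ⊆ X :=
    fun _ ↦ neighborSet_subset_range_inl_of_mem_range_inr hG
  have hNY : ∀ x ∈ X, G.neighborSet x ⊆ Y :=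
    fun _ ↦ neighborSet_subset_range_inr_of_mem_range_inl hG
  have hdegX : ∀ x ∈ X, 2 * Y.ncard < 3 * (G.neighborSet x).ncard := by
    rintro _ ⟨a, rfl⟩; exact hYcard ▸ hdeg_inl a
  have hdegY : ∀ y ∈ Y, 2 * X.ncard < 3 * (G.neighborSet y).ncard := by
    rintro _ ⟨b, rfl⟩; exact hXcard ▸ hdeg_inr b
  obtain ⟨i, C, hC | hC⟩ := hbig
  · exact exists_large_component_of_large_side hXY hNX hNY hdegX hdegY C hC
  · simpa only [add_comm] using
      exists_large_component_of_large_side hXY.symm hNY hNX hdegY hdegX C hC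

end Bipartite

theorem stmt13 (m n : ℕ) (G : SimpleGraph (Fin m ⊕ Fin n))
    (hbip : G ≤ completeBipartiteGraph (Fin m) (Fin n))
    (hX : ∀ x : Fin m, (2 / 3 : ℝ) * n < (nd G (Sum.inl x) : ℝ))
    (hY : ∀ y : Fin n, (2 / 3 : ℝ) * m < (nd G (Sum.inr y) : ℝ))
    (c : Sym2 (Fin m ⊕ Fin n) → Fin 2)
    (hbig : ∃ (i : Fin 2) (C : (colorSub G c i).ConnectedComponent),
      2 * (m : ℝ) / 3 ≤ ((C.supp ∩ Set.range Sum.inl).ncard : ℝ) ∨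
      2 * (n : ℝ) / 3 ≤ ((C.supp ∩ Set.range Sum.inr).ncard : ℝ)) :
    ∃ (i : Fin 2) (C : (colorSub G c i).ConnectedComponent),
      ((m : ℝ) + n) / 2 ≤ C.supp.ncard := by
  have nat_lt_of_real {k d : ℕ} (h : (2 / 3 : ℝ) * k < d) : 2 * k < 3 * d := by
    exact_mod_cast (by linarith : (2 * k : ℝ) < 3 * d)
  have nat_le_of_real {k d : ℕ} (h : 2 * (k : ℝ) / 3 ≤ d) : 2 * k ≤ 3 * d := by
    exact_mod_cast (by linarith : (2 * k : ℝ) ≤ 3 * d)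
  obtain ⟨i, C, hC⟩ := hbig
  obtain ⟨j, D, hD⟩ := exists_large_component_of_le_completeBipartiteGraph hbip
    (by simpa [nd] using fun a ↦ nat_lt_of_real (hX a))
    (by simpa [nd] using fun b ↦ nat_lt_of_real (hY b))
    ⟨i, C, by simpa using hC.imp nat_le_of_real nat_le_of_real⟩
  simp only [Nat.card_eq_fintype_card, Fintype.card_fin] at hD
  refine ⟨j, D, ?_⟩
  have : ((m + n : ℕ) : ℝ) ≤ 2 * D.supp.ncard := by exact_mod_cast hD
  push_cast at this
  linarith
end

section
/- Let G be a bipartite graph with parts X, Y of sizes m, n, with δ(X,Y) > (2/3)n and δ(Y,X) > (2/3)m, and fix a 2-coloring of the edges of G. If some vertex of G is incident only with edges of a single color, then G contains a monochromatic connected component with at least (m+n)/2 vertices. -/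
open SimpleGraph

section Counting

variable {α : Type*} [Finite α]

lemma ncard_add_ncard_le_ncard_inter_add {s t u : Set α} (hs : s ⊆ u) (ht : t ⊆ u) :
    s.ncard + t.ncard ≤ (s ∩ t).ncard + u.ncard := by
  rw [← Set.ncard_union_add_ncard_inter s t, add_comm]
  exact Nat.add_le_add_left (Set.ncard_le_ncard (Set.union_subset hs ht)) _

lemma ncard_inter_add_ncard_inter_le (s : Set α) {t u : Set α} (h : Disjoint t u) :
    (s ∩ t).ncard + (s ∩ u).ncard ≤ s.ncard := by
  rw [← Set.ncard_union_eq (h.mono Set.inter_subset_right Set.inter_subset_right)]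
  exact Set.ncard_le_ncard (Set.union_subset Set.inter_subset_left Set.inter_subset_left)

end Counting

lemma two_thirds_mul_lt_iff {a b : ℕ} : (2 / 3 : ℝ) * a < b ↔ 2 * a < 3 * b := by
  rw [← Nat.cast_lt (α := ℝ)]
  push_cast
  constructor <;> intro h <;> linarith

section Coloring

variable {V : Type*} {G : SimpleGraph V} (c : Sym2 V → Fin 2)

lemma colorSub_adj_or_adj_rev (i : Fin 2) {u w : V} (h : G.Adj u w) :
    (colorSub G c i).Adj u w ∨ (colorSub G c i.rev).Adj u w := by
  by_cases hc : c s(u, w) = i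
  · exact Or.inl ⟨h, hc⟩
  · refine Or.inr ⟨h, ?_⟩
    revert hc
    generalize c s(u, w) = a
    fin_cases i <;> fin_cases a <;> simp

lemma mem_supp_or_mem_supp_of_adj {i : Fin 2} {C : (colorSub G c i).ConnectedComponent}
    {D : (colorSub G c i.rev).ConnectedComponent} {x y : V} (hxy : G.Adj x y)
    (hC : y ∈ C.supp) (hD : y ∈ D.supp) : x ∈ C.supp ∨ x ∈ D.supp :=
  (colorSub_adj_or_adj_rev c i hxy).imp (fun h => (C.mem_supp_congr_adj h).mpr hC)
    (fun h => (D.mem_supp_congr_adj h).mpr hD)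

variable [Finite V]

lemma exists_adj_mem_of_lt_nd_add_ncard {x : V} {S Y : Set V} (hN : G.neighborSet x ⊆ Y)
    (hS : S ⊆ Y) (h : Y.ncard < nd G x + S.ncard) : ∃ y ∈ S, G.Adj x y := by
  have := ncard_add_ncard_le_ncard_inter_add hN hS
  obtain ⟨y, hy, hyS⟩ : (G.neighborSet x ∩ S).Nonempty :=
    Set.nonempty_of_ncard_ne_zero (by unfold nd at h; omega)
  exact ⟨y, hyS, hy⟩

lemma subset_supp_union_supp_of_lt_three_mul {X Y S : Set V}
    (hN : ∀ x ∈ X, G.neighborSet x ⊆ Y) (hdeg : ∀ x ∈ X, 2 * Y.ncard < 3 * nd G x) (hSY : S ⊆ Y) (hS : Y.ncard < 3 * S.ncard)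
    {i : Fin 2} {C : (colorSub G c i).ConnectedComponent}
    {D : (colorSub G c i.rev).ConnectedComponent} (hSC : S ⊆ C.supp) (hSD : S ⊆ D.supp) :
    X ⊆ C.supp ∪ D.supp := fun x hx => by
  obtain ⟨y, hyS, hxy⟩ := exists_adj_mem_of_lt_nd_add_ncard (hN x hx) hSY (by
    have := hdeg x hx
    omega)
  exact mem_supp_or_mem_supp_of_adj c hxy (hSC hyS) (hSD hyS)

theorem exists_large_monochromatic_component_s14 {X Y : Set V} (hXY : Disjoint X Y)
    (hN : ∀ x ∈ X, G.neighborSet x ⊆ Y) (hdeg : ∀ x ∈ X, 2 * Y.ncard < 3 * nd G x)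
    {v : V} (hv : v ∈ X) {i : Fin 2} (hvi : ∀ u, G.Adj v u → c s(v, u) = i) :
    ∃ (j : Fin 2) (C : (colorSub G c j).ConnectedComponent),
      X.ncard + Y.ncard ≤ 2 * C.supp.ncard := by
  set C := (colorSub G c i).connectedComponentMk v
  have hCY : 2 * Y.ncard < 3 * (C.supp ∩ Y).ncard := by
    have hsub : G.neighborSet v ⊆ C.supp ∩ Y := fun u hu =>
      ⟨C.mem_supp_of_adj_mem_supp rfl ⟨hu, hvi u hu⟩, hN v hv hu⟩
    have := Set.ncard_le_ncard hsub
    have := hdeg v hv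
    unfold nd at this
    omega
  have hC := ncard_inter_add_ncard_inter_le C.supp hXY
  by_cases hXC : X ⊆ C.supp
  · refine ⟨i, C, ?_⟩
    rw [Set.inter_eq_right.mpr hXC] at hC
    omega
  obtain ⟨x₁, hx₁X, hx₁C⟩ := Set.not_subset.mp hXC
  set D := (colorSub G c i.rev).connectedComponentMk x₁
  set S := G.neighborSet x₁ ∩ (C.supp ∩ Y)
  have hSD : S ⊆ D.supp := fun y ⟨hy, hyC, _⟩ =>
    (colorSub_adj_or_adj_rev c i hy).elim
      (fun h => absurd ((C.mem_supp_congr_adj h).mpr hyC) hx₁C)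
      (D.mem_supp_of_adj_mem_supp rfl)
  have hSY : S ⊆ Y := fun y hy => hy.2.2
  have hS : Y.ncard < 3 * S.ncard := by
    have : nd G x₁ + (C.supp ∩ Y).ncard ≤ S.ncard + Y.ncard :=
      ncard_add_ncard_le_ncard_inter_add (hN x₁ hx₁X) Set.inter_subset_right
    have := hdeg x₁ hx₁X
    omega
  have hXCD : X.ncard ≤ (C.supp ∩ X).ncard + (D.supp ∩ X).ncard := by
    have hcover := subset_supp_union_supp_of_lt_three_mul c hN hdeg hSY hS
      (fun y hy => hy.2.1) hSD
    have hsub : X ⊆ C.supp ∩ X ∪ D.supp ∩ X := fun x hx =>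
      (hcover hx).imp (⟨·, hx⟩) (⟨·, hx⟩)
    exact (Set.ncard_le_ncard hsub).trans (Set.ncard_union_le _ _)
  have hD := ncard_inter_add_ncard_inter_le D.supp hXY
  have hSDY : S.ncard ≤ (D.supp ∩ Y).ncard :=
    Set.ncard_le_ncard fun y hy => ⟨hSD hy, hSY hy⟩
  by_cases hCbig : X.ncard + Y.ncard ≤ 2 * C.supp.ncard
  · exact ⟨i, C, hCbig⟩
  · exact ⟨i.rev, D, by omega⟩

end Coloring

section Bipartite

variable {α β : Type*} {G : SimpleGraph (α ⊕ β)}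

lemma neighborSet_inl_subset_range_inr (h : G ≤ completeBipartiteGraph α β) (a : α) :
    G.neighborSet (.inl a) ⊆ Set.range .inr := by
  rintro (a' | b) hadj
  · exact absurd (h hadj) (by simp)
  · exact ⟨b, rfl⟩

lemma neighborSet_inr_subset_range_inl (h : G ≤ completeBipartiteGraph α β) (b : β) :
    G.neighborSet (.inr b) ⊆ Set.range .inl := by
  rintro (a | b') hadj
  · exact ⟨a, rfl⟩
  · exact absurd (h hadj) (by simp)

end Bipartite

theorem stmt14 (m n : ℕ) (G : SimpleGraph (Fin m ⊕ Fin n))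
    (hbip : G ≤ completeBipartiteGraph (Fin m) (Fin n))
    (hX : ∀ x : Fin m, (2 / 3 : ℝ) * n < (nd G (Sum.inl x) : ℝ))
    (hY : ∀ y : Fin n, (2 / 3 : ℝ) * m < (nd G (Sum.inr y) : ℝ))
    (c : Sym2 (Fin m ⊕ Fin n) → Fin 2)
    (hv : ∃ (v : Fin m ⊕ Fin n) (i : Fin 2), ∀ u, G.Adj v u → c s(v, u) = i) :
    ∃ (i : Fin 2) (C : (colorSub G c i).ConnectedComponent),
      ((m : ℝ) + n) / 2 ≤ C.supp.ncard := by
  obtain ⟨v, i, hvi⟩ := hv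
  have hm : (Set.range (Sum.inl : Fin m → Fin m ⊕ Fin n)).ncard = m := by
    simp [Set.ncard_range_of_injective Sum.inl_injective]
  have hn : (Set.range (Sum.inr : Fin n → Fin m ⊕ Fin n)).ncard = n := by
    simp [Set.ncard_range_of_injective Sum.inr_injective]
  obtain ⟨j, C, hC⟩ : ∃ (j : Fin 2) (C : (colorSub G c j).ConnectedComponent),
      m + n ≤ 2 * C.supp.ncard := by
    rcases v with x | y
    · simpa [hm, hn] using exists_large_monochromatic_component_s14 c
        Set.isCompl_range_inl_range_inr.disjoint
        (by rintro _ ⟨x, rfl⟩; exact neighborSet_inl_subset_range_inr hbip x)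
        (by rintro _ ⟨x, rfl⟩; rw [hn]; exact two_thirds_mul_lt_iff.mp (hX x)) ⟨x, rfl⟩ hvi
    · simpa [hm, hn, add_comm] using exists_large_monochromatic_component_s14 c
        Set.isCompl_range_inl_range_inr.disjoint.symm
        (by rintro _ ⟨y, rfl⟩; exact neighborSet_inr_subset_range_inl hbip y)
        (by rintro _ ⟨y, rfl⟩; rw [hm]; exact two_thirds_mul_lt_iff.mp (hY y)) ⟨y, rfl⟩ hvi
  refine ⟨j, C, ?_⟩
  have : ((m + n : ℕ) : ℝ) ≤ 2 * C.supp.ncard := by exact_mod_cast hC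
  push_cast at this
  linarith
end

section
/- Let G be a bipartite graph with parts X, Y of sizes m, n, with δ(X,Y) > (2/3)n and δ(Y,X) > (2/3)m, and fix a 2-coloring of its edges. If H is a largest monochromatic component (say blue), then |H ∩ Y| > n/3 and |H ∩ X| > m/3. -/
open SimpleGraph

/-! Let `S` be the vertex set of `H`, of color `i`, and suppose that `S` has at most `|Y|/3`
vertices in `Y`. Every `x ∈ X` has more than `2|Y|/3` neighbors, so it
has more than `|Y|/3` neighbors in one of the two colors, and its component `D` in that color
then has more than `|Y|/3 ≥ |S ∩ Y|` vertices in `Y`. If `D` also contains `S ∩ X`, it is larger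
than `H`. This settles the case `S ∩ X = ∅`; otherwise take `x ∈ S ∩ X`: its `i`-neighbors lie in
`S ∩ Y`, so `D` is its component in the other color, and some `x₂ ∈ S ∩ X` lies outside `D`.
Then no common neighbor of `x` and `x₂` is joined to both by edges of the other color, so all of
them lie in `S`; but `x` and `x₂` have more than `|Y|/3` common neighbors. -/

lemma fin_two_eq_or_eq_add_one (i j : Fin 2) : j = i ∨ j = i + 1 := by
  revert i j; decide

lemma Nat.two_mul_lt_three_mul_of_real {a b : ℕ} (h : (2 / 3 : ℝ) * a < b) : 2 * a < 3 * b := by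
  exact_mod_cast (by push_cast; linarith : ((2 * a : ℕ) : ℝ) < ((3 * b : ℕ) : ℝ))

namespace Set

variable {α : Type*} [Finite α]

lemma ncard_add_ncard_le_ncard_add_ncard_inter {s t u : Set α} (hs : s ⊆ u) (ht : t ⊆ u) :
    s.ncard + t.ncard ≤ u.ncard + (s ∩ t).ncard := by
  rw [← ncard_inter_add_ncard_union s t]
  have := ncard_le_ncard (union_subset hs ht)
  omega

lemma ncard_eq_ncard_inter_add_ncard_inter_compl (s X : Set α) :
    s.ncard = (s ∩ X).ncard + (s ∩ Xᶜ).ncard := by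
  rw [← sdiff_eq, ncard_inter_add_ncard_sdiff_eq_ncard]

lemma ncard_inter_compl_le_of_ncard_le {s t X : Set α} (hts : t.ncard ≤ s.ncard)
    (hst : s ∩ X ⊆ t) : (t ∩ Xᶜ).ncard ≤ (s ∩ Xᶜ).ncard := by
  have := ncard_le_ncard (subset_inter hst inter_subset_right)
  rw [ncard_eq_ncard_inter_add_ncard_inter_compl s X,
    ncard_eq_ncard_inter_add_ncard_inter_compl t X] at hts
  omega

end Set

namespace SimpleGraph

variable {V : Type*}

lemma ncard_neighborSet_le_ncard_supp_inter [Finite V] {H : SimpleGraph V}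
    {C : H.ConnectedComponent} {Y : Set V} {x : V} (hx : x ∈ C.supp)
    (hY : H.neighborSet x ⊆ Y) : (H.neighborSet x).ncard ≤ (C.supp ∩ Y).ncard :=
  Set.ncard_le_ncard fun _ hy => ⟨C.mem_supp_of_adj_mem_supp hx hy, hY hy⟩

lemma isBipartiteWith_range_inl_range_inr {α β : Type*} {G : SimpleGraph (α ⊕ β)}
    (h : G ≤ completeBipartiteGraph α β) :
    G.IsBipartiteWith (Set.range Sum.inl) (Set.range Sum.inr) where
  disjoint := Set.isCompl_range_inl_range_inr.disjoint
  mem_of_adj := by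
    rintro (a | a) (b | b) hab <;> simp <;> simpa using h hab

lemma colorSub_le {r : ℕ} (G : SimpleGraph V) (c : Sym2 V → Fin r) (i : Fin r) :
    colorSub G c i ≤ G :=
  fun _ _ h => h.1

lemma ncard_neighborSet_le_add_colorSub [Finite V] (G : SimpleGraph V) (c : Sym2 V → Fin 2)
    (i : Fin 2) (v : V) :
    (G.neighborSet v).ncard ≤
      ((colorSub G c i).neighborSet v).ncard + ((colorSub G c (i + 1)).neighborSet v).ncard :=
  (Set.ncard_le_ncard fun w hw =>
    (fin_two_eq_or_eq_add_one i (c s(v, w))).imp (And.intro hw) (And.intro hw)).trans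
    (Set.ncard_union_le _ _)

variable {G : SimpleGraph V}

lemma IsBipartiteWith.nonempty_of_two_mul_lt {X Y : Set V} {x : V} (hG : G.IsBipartiteWith X Y)
    (hx : x ∈ X) (hdeg : 2 * Y.ncard < 3 * (G.neighborSet x).ncard) : Y.Nonempty :=
  (Set.nonempty_of_ncard_ne_zero (by omega)).mono (isBipartiteWith_neighborSet_subset hG hx)

variable {c : Sym2 V → Fin 2}

lemma inter_neighborSet_subset_supp {i : Fin 2} {C : (colorSub G c i).ConnectedComponent}
    {x₁ x₂ : V} (h₁ : x₁ ∈ C.supp) (h₂ : x₂ ∈ C.supp)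
    (hnr : ¬ (colorSub G c (i + 1)).Reachable x₁ x₂) :
    G.neighborSet x₁ ∩ G.neighborSet x₂ ⊆ C.supp := by
  rintro y ⟨hy₁, hy₂⟩
  rcases fin_two_eq_or_eq_add_one i (c s(x₁, y)) with e₁ | e₁
  · exact C.mem_supp_of_adj_mem_supp h₁ ⟨hy₁, e₁⟩
  rcases fin_two_eq_or_eq_add_one i (c s(x₂, y)) with e₂ | e₂
  · exact C.mem_supp_of_adj_mem_supp h₂ ⟨hy₂, e₂⟩
  have a₁ : (colorSub G c (i + 1)).Adj x₁ y := ⟨hy₁, e₁⟩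
  have a₂ : (colorSub G c (i + 1)).Adj x₂ y := ⟨hy₂, e₂⟩
  exact absurd (a₁.reachable.trans a₂.reachable.symm) hnr

theorem lt_three_mul_ncard_supp_inter [Finite V] {X Y : Set V} {i₀ : Fin 2}
    {C₀ : (colorSub G c i₀).ConnectedComponent} (hG : G.IsBipartiteWith X Y) (hXY : IsCompl X Y)
    (hX : X.Nonempty) (hdeg : ∀ x ∈ X, 2 * Y.ncard < 3 * (G.neighborSet x).ncard)
    (hmax : ∀ (j : Fin 2) (D : (colorSub G c j).ConnectedComponent),
      D.supp.ncard ≤ C₀.supp.ncard) :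
    Y.ncard < 3 * (C₀.supp ∩ Y).ncard := by
  obtain rfl := hXY.compl_eq
  by_contra! hsmall
  have hnbr : ∀ x ∈ X, G.neighborSet x ⊆ Xᶜ := fun _ => isBipartiteWith_neighborSet_subset hG
  have hlow : ∀ x ∈ X, ∀ j (D : (colorSub G c j).ConnectedComponent), x ∈ D.supp →
      C₀.supp ∩ X ⊆ D.supp → 3 * ((colorSub G c j).neighborSet x).ncard ≤ Xᶜ.ncard := by
    intro x hx j D hxD hD
    have := ncard_neighborSet_le_ncard_supp_inter hxD
      ((neighborSet_mono (colorSub_le G c j) x).trans (hnbr x hx))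
    have := Set.ncard_inter_compl_le_of_ncard_le (hmax j D) hD
    omega
  rcases (C₀.supp ∩ X).eq_empty_or_nonempty with hempty | ⟨x, hxC, hxX⟩
  · obtain ⟨x, hx⟩ := hX
    have := hlow x hx i₀ _ rfl (by simp [hempty])
    have := hlow x hx (i₀ + 1) _ rfl (by simp [hempty])
    have := ncard_neighborSet_le_add_colorSub G c i₀ x
    have := hdeg x hx
    omega
  have hnot : ¬ C₀.supp ∩ X ⊆ ((colorSub G c (i₀ + 1)).connectedComponentMk x).supp := by
    intro hD
    have := hlow x hxX i₀ C₀ hxC Set.inter_subset_left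
    have := hlow x hxX (i₀ + 1) _ rfl hD
    have := ncard_neighborSet_le_add_colorSub G c i₀ x
    have := hdeg x hxX
    omega
  obtain ⟨x₂, ⟨hx₂C, hx₂X⟩, hx₂⟩ := Set.not_subset.mp hnot
  have hcommon : G.neighborSet x ∩ G.neighborSet x₂ ⊆ C₀.supp ∩ Xᶜ :=
    Set.subset_inter
      (inter_neighborSet_subset_supp hxC hx₂C fun h => hx₂ (ConnectedComponent.sound h).symm)
      (Set.inter_subset_left.trans (hnbr x hxX))
  have := Set.ncard_le_ncard hcommon
  have := Set.ncard_add_ncard_le_ncard_add_ncard_inter (hnbr x hxX) (hnbr x₂ hx₂X)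
  have := hdeg x hxX
  have := hdeg x₂ hx₂X
  omega

end SimpleGraph

theorem stmt15 (m n : ℕ) (G : SimpleGraph (Fin m ⊕ Fin n))
    (hbip : G ≤ completeBipartiteGraph (Fin m) (Fin n))
    (hX : ∀ x : Fin m, (2 / 3 : ℝ) * n < (nd G (Sum.inl x) : ℝ))
    (hY : ∀ y : Fin n, (2 / 3 : ℝ) * m < (nd G (Sum.inr y) : ℝ))
    (c : Sym2 (Fin m ⊕ Fin n) → Fin 2)
    (i₀ : Fin 2) (C₀ : (colorSub G c i₀).ConnectedComponent)
    (hmax : ∀ (j : Fin 2) (D : (colorSub G c j).ConnectedComponent),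
      D.supp.ncard ≤ C₀.supp.ncard) :
    (n : ℝ) / 3 < ((C₀.supp ∩ Set.range Sum.inr).ncard : ℝ) ∧
    (m : ℝ) / 3 < ((C₀.supp ∩ Set.range Sum.inl).ncard : ℝ) := by
  set L := Set.range (Sum.inl : Fin m → Fin m ⊕ Fin n)
  set R := Set.range (Sum.inr : Fin n → Fin m ⊕ Fin n)
  have hG : G.IsBipartiteWith L R := isBipartiteWith_range_inl_range_inr hbip
  have hcardL : L.ncard = m := by simp [L, Set.ncard_range_of_injective Sum.inl_injective]
  have hcardR : R.ncard = n := by simp [R, Set.ncard_range_of_injective Sum.inr_injective]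
  have hdegL : ∀ x ∈ L, 2 * R.ncard < 3 * (G.neighborSet x).ncard := by
    rintro _ ⟨a, rfl⟩
    rw [hcardR]
    exact Nat.two_mul_lt_three_mul_of_real (hX a)
  have hdegR : ∀ y ∈ R, 2 * L.ncard < 3 * (G.neighborSet y).ncard := by
    rintro _ ⟨b, rfl⟩
    rw [hcardL]
    exact Nat.two_mul_lt_three_mul_of_real (hY b)
  have hne : L.Nonempty ∧ R.Nonempty := by
    obtain ⟨a | b, -⟩ := C₀.nonempty_supp
    · exact ⟨⟨_, a, rfl⟩, hG.nonempty_of_two_mul_lt ⟨a, rfl⟩ (hdegL _ ⟨a, rfl⟩)⟩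
    · exact ⟨hG.symm.nonempty_of_two_mul_lt ⟨b, rfl⟩ (hdegR _ ⟨b, rfl⟩), ⟨_, b, rfl⟩⟩
  have hRside :=
    lt_three_mul_ncard_supp_inter hG Set.isCompl_range_inl_range_inr hne.1 hdegL hmax
  have hLside := lt_three_mul_ncard_supp_inter hG.symm Set.isCompl_range_inl_range_inr.symm
    hne.2 hdegR hmax
  rw [hcardR] at hRside
  rw [hcardL] at hLside
  rw [div_lt_iff₀' three_pos, div_lt_iff₀' three_pos]
  exact ⟨mod_cast hRside, mod_cast hLside⟩
end
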